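/- Let M be a ℤ/2-graded module over the complex Clifford algebra Cl_2 via γ: Cl_2 → End(M), and let M' be the same vector space with Cl_2 acting via e_1 ↦ γ(e_2), e_2 ↦ γ(e_1). Define operators on M ⊕ M' by γ̃(e_1) = γ(e_1) ⊕ γ(e_2), γ̃(e_2) = γ(e_2) ⊕ γ(e_1), and γ̃(e_3) = (1/√2)·(off-diagonal blocks both equal to γ(e_1) - γ(e_2)). Then γ̃(e_1), γ̃(e_2), γ̃(e_3) satisfy the Clifford relations γ̃(e_j)γ̃(e_k) + γ̃(e_k)γ̃(e_j) = -2δ_{jk}. -/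
import Mathlib


/-- The quadratic form `x ↦ -Σ x_j²` on `ℂ²`, whose Clifford algebra is the complex
Clifford algebra `Cl_2` with `e_j e_k + e_k e_j = -2δ_{jk}`. -/
noncomputable def Q2 : QuadraticForm ℂ (Fin 2 → ℂ) :=
  -QuadraticMap.weightedSumSquares ℂ (fun _ : Fin 2 => (1 : ℂ))

/-- given a `Cl_2`-module `M` via `γ : Cl_2 → End(M)` with `a = γ(e_1)`,
`b = γ(e_2)`, the operators on `M ⊕ M'` given by `γ̃(e_1) = a ⊕ b`, `γ̃(e_2) = b ⊕ a`, and
`γ̃(e_3) = (1/√2)·[[0, a-b],[a-b, 0]]` satisfy the Clifford relations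
`γ̃(e_j)γ̃(e_k) + γ̃(e_k)γ̃(e_j) = -2δ_{jk}`. -/
theorem stmt_3 {M : Type*} [AddCommGroup M] [Module ℂ M]
    (γ : CliffordAlgebra Q2 →ₐ[ℂ] Module.End ℂ M) :
    let a : Module.End ℂ M := γ (CliffordAlgebra.ι Q2 (Pi.single 0 1))
    let b : Module.End ℂ M := γ (CliffordAlgebra.ι Q2 (Pi.single 1 1))
    let swap : (M × M) →ₗ[ℂ] (M × M) := (LinearMap.snd ℂ M M).prod (LinearMap.fst ℂ M M)
    let γt : Fin 3 → Module.End ℂ (M × M) :=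
      ![LinearMap.prodMap a b, LinearMap.prodMap b a,
        ((Real.sqrt 2 : ℂ))⁻¹ • ((LinearMap.prodMap (a - b) (a - b)).comp swap)]
    ∀ j k, γt j * γt k + γt k * γt j
        = if j = k then (-2 : Module.End ℂ (M × M)) else 0 := by
  intro a b swap γt
  have key : ∀ v, γ (CliffordAlgebra.ι Q2 v) * γ (CliffordAlgebra.ι Q2 v)
      = algebraMap ℂ _ (Q2 v) := fun v => by
    rw [← map_mul, CliffordAlgebra.ι_sq_scalar, AlgHom.commutes]
  have ha : a * a = -1 := by
    have := key (Pi.single 0 1)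
    rw [show Q2 (Pi.single 0 1) = -1 by
      simp [Q2, QuadraticMap.weightedSumSquares_apply, Fin.sum_univ_two, Pi.single_apply],
      map_neg, map_one] at this
    exact this
  have hb : b * b = -1 := by
    have := key (Pi.single 1 1)
    rw [show Q2 (Pi.single 1 1) = -1 by
      simp [Q2, QuadraticMap.weightedSumSquares_apply, Fin.sum_univ_two, Pi.single_apply],
      map_neg, map_one] at this
    exact this
  have hab : a * b + b * a = 0 := by
    have := congrArg γ (CliffordAlgebra.ι_mul_ι_add_swap (Q := Q2) (Pi.single 0 1) (Pi.single 1 1))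
    rw [show QuadraticMap.polar Q2 (Pi.single 0 1) (Pi.single 1 1) = 0 by
      simp [QuadraticMap.polar, Q2, QuadraticMap.weightedSumSquares_apply, Fin.sum_univ_two,
        Pi.single_apply]] at this
    simpa using this
  have haa : ∀ x : M, a (a x) = -x := fun x => by
    simpa [Module.End.mul_apply] using LinearMap.congr_fun ha x
  have hbb : ∀ x : M, b (b x) = -x := fun x => by
    simpa [Module.End.mul_apply] using LinearMap.congr_fun hb x
  have hab' : ∀ x : M, a (b x) = -(b (a x)) := fun x => by
    have := LinearMap.congr_fun hab x
    simp only [Module.End.mul_apply, LinearMap.add_apply, LinearMap.zero_apply] at this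
    exact eq_neg_of_add_eq_zero_left this
  have hr : ((Real.sqrt 2 : ℂ))⁻¹ * ((Real.sqrt 2 : ℂ))⁻¹ = 2⁻¹ := by
    rw [← mul_inv, ← Complex.ofReal_mul, Real.mul_self_sqrt (by norm_num)]
    norm_num
  have hγt : γt = ![LinearMap.prodMap a b, LinearMap.prodMap b a,
      ((Real.sqrt 2 : ℂ))⁻¹ • ((LinearMap.prodMap (a - b) (a - b)).comp swap)] := rfl
  have hswap : swap = (LinearMap.snd ℂ M M).prod (LinearMap.fst ℂ M M) := rfl
  clear_value γt swap b a
  clear key ha hb hab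
  subst hγt hswap
  intro j k
  fin_cases j <;> fin_cases k <;>
    refine LinearMap.ext fun x => ?_ <;>
    simp [Fin.isValue, Matrix.cons_val_zero, Matrix.cons_val_one, Matrix.head_cons,
      Matrix.cons_val_two, Matrix.tail_cons, Module.End.mul_apply, LinearMap.add_apply,
      LinearMap.smul_apply, LinearMap.comp_apply, LinearMap.prodMap_apply, LinearMap.prod_apply,
      Pi.prod, LinearMap.fst_apply, LinearMap.snd_apply, LinearMap.sub_apply, Prod.map_apply,
      map_sub, map_smul, Prod.smul_mk, if_true, if_neg, Fin.mk.injEq, LinearMap.neg_apply,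
      LinearMap.zero_apply, Prod.mk.injEq, Prod.ext_iff, Prod.fst_neg, Prod.snd_neg,
      Prod.smul_fst, Prod.smul_snd, map_neg] <;>
    (try simp only [haa, hbb, hab', smul_smul, hr]) <;>
    (try constructor) <;>
    module
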